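/- arXiv:1605.08940 — 3 statements merged into one kernel-verified Lean document; each statement's English description precedes it below -/
import Mathlib

section
/- Let V, W, K, Z be compact spaces, let {μ_w : w ∈ W} be a CSM of strictly positive Borel probability measures on a continuous map π : V → W, and let ν be a Borel probability measure on K. Suppose f₁ : V → K is continuous and, for every w ∈ W, the pushforward of μ_w under the restriction of f₁ to π⁻¹(w) equals ν. Let f₂ : K → Z be Borel measurable. Then the map h : W → 𝓛(V,Z) sending w to the class of (f₂ ∘ f₁) restricted to π⁻¹(w) is continuous. -/
open MeasureTheory

/-- A representative for an element of `𝓛(V,Z)`: a base point `w : W` together with a Borel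
measurable function, considered (via the measure `μ w`, concentrated on the fibre `π⁻¹(w)`) as
a function on the fibre over `w`. -/
structure LRaw (V W Z : Type*) [MeasurableSpace V] [MeasurableSpace Z] where
  base : W
  toFun : V → Z
  meas : Measurable toFun

/-- Two representatives are identified when they have the same base point and agree
`μ w`-almost everywhere. -/
def lSetoid (V W Z : Type*) [MeasurableSpace V] [MeasurableSpace Z]
    (μ : W → Measure V) : Setoid (LRaw V W Z) where
  r f g := f.base = g.base ∧ f.toFun =ᵐ[μ f.base] g.toFun
  iseqv := by
    refine ⟨fun f => ⟨rfl, Filter.EventuallyEq.rfl⟩, ?_, ?_⟩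
    · rintro f g ⟨h1, h2⟩
      refine ⟨h1.symm, ?_⟩
      rw [← h1]
      exact h2.symm
    · rintro f g h ⟨h1, h2⟩ ⟨h3, h4⟩
      refine ⟨h1.trans h3, h2.trans ?_⟩
      rw [h1]
      exact h4

/-- The space `𝓛(V,Z) = ⋃_{w ∈ W} L(π⁻¹(w), Z)`: measurable functions on the fibres, modulo
almost-everywhere equality. -/
def LSpace (V W Z : Type*) [MeasurableSpace V] [MeasurableSpace Z]
    (μ : W → Measure V) : Type _ :=
  Quotient (lSetoid V W Z μ)

/-- The projection `π̃ : 𝓛(V,Z) → W`. -/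
def LSpace.proj (V W Z : Type*) [MeasurableSpace V] [MeasurableSpace Z]
    (μ : W → Measure V) : LSpace V W Z μ → W :=
  Quotient.lift (fun f => f.base) (fun _ _ h => h.1)

/-- The test functions `φ_{F₁,F₂} : f ↦ ∫_{π⁻¹(π̃ f)} F₁(f v) F₂(v) dμ_{π̃ f}(v)` generating
the topology of `𝓛(V,Z)`. -/
noncomputable def lPhi (V W Z : Type*) [TopologicalSpace V] [MeasurableSpace V]
    [TopologicalSpace Z] [MeasurableSpace Z] (μ : W → Measure V)
    (F₁ : C(Z, ℂ)) (F₂ : C(V, ℂ)) : LSpace V W Z μ → ℂ :=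
  Quotient.lift (fun f => ∫ v, F₁ (f.toFun v) * F₂ v ∂(μ f.base))
    (by
      rintro f g ⟨h1, h2⟩
      show ∫ v, F₁ (f.toFun v) * F₂ v ∂(μ f.base) = ∫ v, F₁ (g.toFun v) * F₂ v ∂(μ g.base)
      rw [h1] at h2 ⊢
      exact integral_congr_ae (h2.mono fun v hv => by simp only []; rw [hv]))

/-- The topology of `𝓛(V,Z)`: the coarsest topology making all the functions `φ_{F₁,F₂}`
continuous, for `F₁ : Z → ℂ` and `F₂ : V → ℂ` continuous. -/
noncomputable def lTop (V W Z : Type*) [TopologicalSpace V] [MeasurableSpace V]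
    [TopologicalSpace Z] [MeasurableSpace Z] (μ : W → Measure V) :
    TopologicalSpace (LSpace V W Z μ) :=
  ⨅ (F₁ : C(Z, ℂ)) (F₂ : C(V, ℂ)),
    TopologicalSpace.induced (lPhi V W Z μ F₁ F₂) inferInstance

set_option maxHeartbeats 1000000 in

private theorem stmt12_key
    {V W K : Type*}
    [TopologicalSpace V] [CompactSpace V] [T2Space V] [SecondCountableTopology V]
    [MeasurableSpace V] [BorelSpace V]
    [TopologicalSpace W]
    [TopologicalSpace K] [CompactSpace K] [T2Space K] [SecondCountableTopology K]
    [MeasurableSpace K] [BorelSpace K]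
    (μ : W → Measure V)
    (hprob : ∀ w : W, IsProbabilityMeasure (μ w))
    (hcont : ∀ f : C(V, ℂ), Continuous fun w : W => ∫ v, f v ∂(μ w))
    (ν : Measure K) [IsProbabilityMeasure ν]
    (f₁ : V → K) (hf₁ : Continuous f₁)
    (hpush : ∀ w : W, Measure.map f₁ (μ w) = ν)
    (g : K → ℂ) (hg : Measurable g) (C : ℝ) (hC : ∀ k, ‖g k‖ ≤ C)
    (F₂ : C(V, ℂ)) :
    Continuous fun w : W => ∫ v, g (f₁ v) * F₂ v ∂(μ w) := by
  haveI := hprob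
  -- integrability helpers
  have intble : ∀ (φ : V → ℂ), Measurable φ → ∀ (D : ℝ), (∀ v, ‖φ v‖ ≤ D) → ∀ w,
      Integrable φ (μ w) := fun φ hφ D hD w =>
    (integrable_const D).mono' hφ.aestronglyMeasurable (ae_of_all _ hD)
  have hgint : Integrable g ν := (integrable_const C).mono' hg.aestronglyMeasurable (ae_of_all _ hC)
  choose G hG hGint using fun n : ℕ =>
    hgint.exists_boundedContinuous_integral_sub_le (ε := 1 / (n + 1)) (by positivity)
  have hF₂ : ∀ v, ‖F₂ v‖ ≤ ‖F₂‖ := fun v => F₂.norm_coe_le_norm v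
  -- the approximating continuous functions
  have contFn : ∀ n : ℕ, Continuous fun w => ∫ v, G n (f₁ v) * F₂ v ∂(μ w) := fun n =>
    hcont ⟨fun v => G n (f₁ v) * F₂ v, ((G n).continuous.comp hf₁).mul F₂.continuous⟩
  -- key estimate
  have est : ∀ (n : ℕ) (w : W),
      dist (∫ v, g (f₁ v) * F₂ v ∂(μ w)) (∫ v, G n (f₁ v) * F₂ v ∂(μ w))
        ≤ (1 / (n + 1)) * ‖F₂‖ := by
    intro n w
    have i1 : Integrable (fun v => g (f₁ v) * F₂ v) (μ w) :=
      intble _ ((hg.comp hf₁.measurable).mul F₂.continuous.measurable) (C * ‖F₂‖)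
        (fun v => by
          rw [Pi.mul_apply, norm_mul]
          exact mul_le_mul (hC _) (hF₂ v) (norm_nonneg _) ((norm_nonneg _).trans (hC (f₁ v)))) w
    have i2 : Integrable (fun v => (G n) (f₁ v) * F₂ v) (μ w) :=
      intble _ (((G n).continuous.measurable.comp hf₁.measurable).mul F₂.continuous.measurable)
        (‖G n‖ * ‖F₂‖)
        (fun v => by
          rw [Pi.mul_apply, norm_mul]
          exact mul_le_mul ((G n).norm_coe_le_norm _) (hF₂ v) (norm_nonneg _) (norm_nonneg _)) w
    rw [dist_eq_norm, ← integral_sub i1 i2]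
    have : (fun v => g (f₁ v) * F₂ v - (G n) (f₁ v) * F₂ v)
        = fun v => (g (f₁ v) - (G n) (f₁ v)) * F₂ v := by
      funext v; ring
    rw [this]
    calc ‖∫ v, (g (f₁ v) - (G n) (f₁ v)) * F₂ v ∂(μ w)‖
        ≤ ∫ v, ‖(g (f₁ v) - (G n) (f₁ v)) * F₂ v‖ ∂(μ w) := norm_integral_le_integral_norm _
      _ ≤ ∫ v, ‖g (f₁ v) - (G n) (f₁ v)‖ * ‖F₂‖ ∂(μ w) := by
          have meas_d : Measurable fun v => g (f₁ v) - (G n) (f₁ v) :=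
            (hg.comp hf₁.measurable).sub ((G n).continuous.measurable.comp hf₁.measurable)
          have bd_d : ∀ v, ‖g (f₁ v) - (G n) (f₁ v)‖ ≤ C + ‖G n‖ := fun v =>
            (norm_sub_le _ _).trans (add_le_add (hC _) ((G n).norm_coe_le_norm _))
          have j1 : Integrable (fun v => ‖(g (f₁ v) - (G n) (f₁ v)) * F₂ v‖) (μ w) :=
            (intble _ (meas_d.mul F₂.continuous.measurable) ((C + ‖G n‖) * ‖F₂‖)
              (fun v => by
                rw [Pi.mul_apply, norm_mul]
                exact mul_le_mul (bd_d v) (hF₂ v) (norm_nonneg _)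
                  ((norm_nonneg _).trans (bd_d v))) w).norm
          have j2 : Integrable (fun v => ‖g (f₁ v) - (G n) (f₁ v)‖ * ‖F₂‖) (μ w) :=
            ((intble _ meas_d (C + ‖G n‖) bd_d w).norm).mul_const _
          refine integral_mono j1 j2 fun v => ?_
          rw [norm_mul]
          exact mul_le_mul_of_nonneg_left (hF₂ v) (norm_nonneg _)
      _ = (∫ v, ‖g (f₁ v) - (G n) (f₁ v)‖ ∂(μ w)) * ‖F₂‖ := integral_mul_const _ _
      _ ≤ (1 / (n + 1)) * ‖F₂‖ := by
          apply mul_le_mul_of_nonneg_right ?_ (norm_nonneg _)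
          have hchg : (∫ v, ‖g (f₁ v) - (G n) (f₁ v)‖ ∂(μ w))
              = ∫ k, ‖g k - (G n) k‖ ∂ν := by
            rw [← hpush w]
            exact (integral_map hf₁.measurable.aemeasurable
              ((hg.sub (G n).continuous.measurable).norm.aestronglyMeasurable)).symm
          rw [hchg]
          exact hG n
  -- uniform convergence
  have tu : TendstoUniformly (fun n w => ∫ v, G n (f₁ v) * F₂ v ∂(μ w))
      (fun w => ∫ v, g (f₁ v) * F₂ v ∂(μ w)) Filter.atTop := by
    rw [Metric.tendstoUniformly_iff]
    intro ε hε
    have h0 : Filter.Tendsto (fun n : ℕ => (1 / (n + 1 : ℝ)) * ‖F₂‖) Filter.atTop (nhds 0) := by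
      simpa using tendsto_one_div_add_atTop_nhds_zero_nat.mul_const ‖F₂‖
    filter_upwards [h0.eventually (gt_mem_nhds hε)] with n hn w
    exact lt_of_le_of_lt (est n w) hn
  exact tu.continuous (Filter.Eventually.of_forall contFn).frequently

/-- Let `V, W, K, Z` be compact (Hausdorff, second-countable) spaces, let
`{μ w : w ∈ W}` be a CSM of strictly positive Borel probability measures on a continuous map
`π : V → W`, and let `ν` be a Borel probability measure on `K`.  Suppose `f₁ : V → K` is
continuous and for every `w` the pushforward of `μ w` under (the restriction to the fibre of)
`f₁` equals `ν`.  Let `f₂ : K → Z` be Borel measurable.  Then the map `h : W → 𝓛(V,Z)`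
sending `w` to the class of `f₂ ∘ f₁` on the fibre over `w` is continuous. -/
theorem stmt12
    {V W K Z : Type*}
    [TopologicalSpace V] [CompactSpace V] [T2Space V] [SecondCountableTopology V]
    [MeasurableSpace V] [BorelSpace V]
    [TopologicalSpace W] [CompactSpace W] [T2Space W] [SecondCountableTopology W]
    [MeasurableSpace W] [BorelSpace W]
    [TopologicalSpace K] [CompactSpace K] [T2Space K] [SecondCountableTopology K]
    [MeasurableSpace K] [BorelSpace K]
    [TopologicalSpace Z] [CompactSpace Z] [T2Space Z] [SecondCountableTopology Z]
    [MeasurableSpace Z] [BorelSpace Z]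
    (π : V → W) (hπ : Continuous π)
    (μ : W → Measure V)
    (hprob : ∀ w : W, IsProbabilityMeasure (μ w))
    (hconc : ∀ w : W, μ w ((π ⁻¹' ({w} : Set W))ᶜ) = 0)
    (hpos : ∀ (w : W) (U : Set V), IsOpen U → (U ∩ π ⁻¹' ({w} : Set W)).Nonempty → 0 < μ w U)
    (hcont : ∀ f : C(V, ℂ), Continuous fun w : W => ∫ v, f v ∂(μ w))
    (ν : Measure K) [IsProbabilityMeasure ν]
    (f₁ : V → K) (hf₁ : Continuous f₁)
    (hpush : ∀ w : W, Measure.map f₁ (μ w) = ν)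
    (f₂ : K → Z) (hf₂ : Measurable f₂) :
    @Continuous W (LSpace V W Z μ) _ (lTop V W Z μ)
      (fun w : W =>
        Quotient.mk (lSetoid V W Z μ) ⟨w, f₂ ∘ f₁, hf₂.comp hf₁.measurable⟩) := by
  refine continuous_iInf_rng.2 fun F₁ => continuous_iInf_rng.2 fun F₂ => ?_
  refine continuous_induced_rng.2 ?_
  exact stmt12_key μ hprob hcont ν f₁ hf₁ hpush (fun k => F₁ (f₂ k))
    (F₁.continuous.measurable.comp hf₂) ‖F₁‖ (fun k => F₁.norm_coe_le_norm _) F₂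
end

section
/- Let V, W be compact spaces, let {μ_w : w ∈ W} be a CSM of strictly positive Borel probability measures on a continuous map π : V → W, let A be a compact abelian topological group which is a compact space, let P be a finite set, and for each r ∈ P let λ_r be an integer. Then the map Σ_P : 𝓛(V, A^P) → 𝓛(V, A) sending a class f ∈ L(π⁻¹(w), A^P) to the class of v ↦ Σ_{r ∈ P} λ_r · (f(v))_r in L(π⁻¹(w), A) is continuous. -/
open MeasureTheory

/-- The map `Σ_P : 𝓛(V, A^P) → 𝓛(V, A)` sending (the class of) `f` to the class of
`v ↦ ∑_{r ∈ P} λ_r · (f v)_r`. -/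
noncomputable def lSigma (V W A P : Type*) [MeasurableSpace V]
    [AddCommGroup A] [TopologicalSpace A] [IsTopologicalAddGroup A]
    [SecondCountableTopology A] [MeasurableSpace A] [BorelSpace A] [Fintype P]
    (μ : W → Measure V) (lam : P → ℤ) :
    LSpace V W (P → A) μ → LSpace V W A μ :=
  Quotient.lift
    (fun f => Quotient.mk (lSetoid V W A μ)
      ⟨f.base, fun v => ∑ r : P, lam r • f.toFun v r,
        ((continuous_finset_sum Finset.univ
            (fun r _ => (continuous_zsmul (lam r)).comp (continuous_apply r))).measurable).comp
          f.meas⟩)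
    (by
      rintro f g ⟨h1, h2⟩
      exact Quotient.sound ⟨h1, h2.mono fun v hv => by simp only []; rw [hv]⟩)

/-- Let `V, W` be compact (Hausdorff, second-countable) spaces,
`{μ w : w ∈ W}` a CSM of strictly positive Borel probability measures on a continuous map
`π : V → W`, `A` a compact abelian topological group which is a compact space, `P` a finite set,
and `λ_r ∈ ℤ` for `r ∈ P`.  Then the map `Σ_P : 𝓛(V, A^P) → 𝓛(V, A)`,
`f ↦ Σ_{r ∈ P} λ_r · (f ·)_r`, is continuous. -/
theorem stmt13
    {V W A P : Type*}
    [TopologicalSpace V] [CompactSpace V] [T2Space V] [SecondCountableTopology V]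
    [MeasurableSpace V] [BorelSpace V]
    [TopologicalSpace W] [CompactSpace W] [T2Space W] [SecondCountableTopology W]
    [MeasurableSpace W] [BorelSpace W]
    [AddCommGroup A] [TopologicalSpace A] [IsTopologicalAddGroup A]
    [CompactSpace A] [T2Space A] [SecondCountableTopology A]
    [MeasurableSpace A] [BorelSpace A]
    [Fintype P]
    (π : V → W) (hπ : Continuous π)
    (μ : W → Measure V)
    (hprob : ∀ w : W, IsProbabilityMeasure (μ w))
    (hconc : ∀ w : W, μ w ((π ⁻¹' ({w} : Set W))ᶜ) = 0)
    (hpos : ∀ (w : W) (U : Set V), IsOpen U → (U ∩ π ⁻¹' ({w} : Set W)).Nonempty → 0 < μ w U)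
    (hcont : ∀ f : C(V, ℂ), Continuous fun w : W => ∫ v, f v ∂(μ w))
    (lam : P → ℤ) :
    @Continuous (LSpace V W (P → A) μ) (LSpace V W A μ)
      (lTop V W (P → A) μ) (lTop V W A μ) (lSigma V W A P μ lam) := by
  letI := lTop V W (P → A) μ
  rw [lTop.eq_1 V W A μ, continuous_iInf_rng]
  intro F₁
  rw [continuous_iInf_rng]
  intro F₂
  rw [continuous_induced_rng]
  have hσ : Continuous (fun z : P → A => ∑ r : P, lam r • z r) :=
    continuous_finset_sum Finset.univ
      (fun r _ => (continuous_zsmul (lam r)).comp (continuous_apply r))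
  have hkey : (lPhi V W A μ F₁ F₂) ∘ (lSigma V W A P μ lam) =
      lPhi V W (P → A) μ (F₁.comp ⟨_, hσ⟩) F₂ := by
    funext f
    induction f using Quotient.ind
    rfl
  rw [hkey]
  exact continuous_iInf_dom (continuous_iInf_dom continuous_induced_dom)
end

section
/- Let A be a compact abelian topological group which is a compact space, acting continuously and freely on a compact space B, let S = B/A be the orbit space with the quotient topology, and let π : B → S be the orbit map. Then there exists a Borel measurable map s : S → B such that π(s(x)) = x for every x ∈ S (a Borel cross section of the bundle). -/
open MeasureTheory Set

lemma aux_cross_section {B S : Type*}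
    [MetricSpace B] [CompactSpace B] [SecondCountableTopology B]
    [MeasurableSpace B] [BorelSpace B]
    [TopologicalSpace S] [T2Space S] [MeasurableSpace S] [BorelSpace S]
    (π : B → S) (hc : Continuous π) (hsurj : Function.Surjective π) :
    ∃ s : S → B, Measurable s ∧ ∀ x : S, π (s x) = x := by
  rcases isEmpty_or_nonempty S with hS | hS
  · exact ⟨fun x => isEmptyElim x, measurable_of_empty _, fun x => isEmptyElim x⟩
  have hB : Nonempty B := by
    obtain ⟨b, -⟩ := hsurj (Classical.arbitrary S)
    exact ⟨b⟩
  obtain ⟨u, hu⟩ : ∃ u : ℕ → B, DenseRange u :=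
    ⟨TopologicalSpace.denseSeq B, TopologicalSpace.denseRange_denseSeq B⟩
  set φ : ℕ → B → ℝ := fun n b => dist b (u n) with hφ
  have φcont : ∀ n, Continuous (φ n) := fun n => continuous_id.dist continuous_const
  let K : ℕ → S → Set B := fun n => Nat.rec (fun x => π ⁻¹' {x})
    (fun n Kn x => {b ∈ Kn x | φ n b ≤ sInf (φ n '' Kn x)}) n
  set g : ℕ → S → ℝ := fun n x => sInf (φ n '' K n x) with hg
  have hK0 : ∀ x, K 0 x = π ⁻¹' {x} := fun _ => rfl
  have hKs : ∀ n x, K (n + 1) x = {b ∈ K n x | φ n b ≤ g n x} := fun _ _ => rfl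
  have hKclosed : ∀ n x, IsClosed (K n x) := by
    intro n
    induction n with
    | zero => exact fun x => isClosed_singleton.preimage hc
    | succ n ih => exact fun x => (ih x).inter (isClosed_le (φcont n) continuous_const)
  have hKcompact : ∀ n x, IsCompact (K n x) := fun n x => (hKclosed n x).isCompact
  have hKne : ∀ n x, (K n x).Nonempty := by
    intro n
    induction n with
    | zero => exact fun x => hsurj x
    | succ n ih =>
      intro x
      obtain ⟨b, hb, hmin⟩ := (hKcompact n x).exists_isMinOn (ih x) (φcont n).continuousOn
      refine ⟨b, hb, ?_⟩
      apply le_csInf ((ih x).image _)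
      rintro r ⟨b', hb', rfl⟩
      exact hmin hb'
  have hbdd : ∀ n x, BddBelow (φ n '' K n x) := by
    rintro n x
    exact ⟨0, by rintro r ⟨b, -, rfl⟩; exact dist_nonneg⟩
  have hginf : ∀ n x b, b ∈ K n x → g n x ≤ φ n b := fun n x b hb =>
    csInf_le (hbdd n x) ⟨b, hb, rfl⟩
  have hKanti : ∀ n x, K (n + 1) x ⊆ K n x := fun n x b hb => hb.1
  have hsne : ∀ x, (⋂ n, K n x).Nonempty := fun x =>
    IsCompact.nonempty_iInter_of_sequence_nonempty_isCompact_isClosed _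
      (fun n => hKanti n x) (fun n => hKne n x) (hKcompact 0 x) (fun n => hKclosed n x)
  set s : S → B := fun x => (hsne x).some with hs
  have hsmem : ∀ x n, s x ∈ K n x := fun x n => mem_iInter.1 (hsne x).some_mem n
  have hsec : ∀ x, π (s x) = x := fun x => hsmem x 0
  have hsg : ∀ n x, φ n (s x) = g n x := fun n x =>
    le_antisymm (hsmem x (n + 1)).2 (hginf n x _ (hsmem x n))
  have hmemK : ∀ n x b, π b = x → (∀ i < n, φ i b ≤ g i x) → b ∈ K n x := by
    intro n
    induction n with
    | zero => intro x b hb _; exact hb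
    | succ n ih =>
      intro x b hb h
      exact ⟨ih x b hb (fun i hi => h i (Nat.lt_succ_of_lt hi)), h n (Nat.lt_succ_self n)⟩
  have hπclosed : ∀ C : Set B, IsClosed C → IsClosed (π '' C) :=
    fun C hC => (hC.isCompact.image hc).isClosed
  -- each `g n` is measurable, proved by strong induction on `n`
  have hgmeas : ∀ n, Measurable (g n) := by
    intro n
    induction n using Nat.strong_induction_on with
    | _ n ih =>
    apply measurable_of_Iic
    intro t
    have key : g n ⁻¹' Iic t =
        ⋂ m : ℕ, ⋃ q : Fin n → ℚ,
          ((⋂ i : Fin n, {x | (q i : ℝ) < g i x + 1 / (m + 1)}) ∩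
            π '' ((⋂ i : Fin n, {b | φ i b ≤ (q i : ℝ)}) ∩
              {b | φ n b ≤ t + 1 / (m + 1)})) := by
      ext x
      simp only [mem_preimage, mem_Iic, mem_iInter, mem_iUnion, mem_inter_iff, mem_setOf_eq,
        mem_image]
      constructor
      · intro hgt m
        have hε : (0 : ℝ) < 1 / (m + 1) := by positivity
        have hq : ∀ i : Fin n, ∃ q : ℚ, g i x < q ∧ (q : ℝ) < g i x + 1 / (m + 1) :=
          fun i => exists_rat_btwn (lt_add_of_pos_right (g i x) hε)
        choose q hq1 hq2 using hq
        refine ⟨q, fun i => hq2 i, s x, ⟨fun i => ?_, ?_⟩, hsec x⟩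
        · rw [hsg i x]; exact (hq1 i).le
        · rw [hsg n x]; linarith
      · intro h
        choose q hq b hb hπb using h
        -- pass to a convergent subsequence of the approximate minimizers `b m`
        have hbfib : ∀ m, b m ∈ (π ⁻¹' {x} : Set B) := fun m => hπb m
        obtain ⟨blim, hblim, ψ, hψ, hlim⟩ :=
          (isClosed_singleton.preimage hc).isCompact.tendsto_subseq hbfib
        have hεlim : Filter.Tendsto (fun m : ℕ => 1 / ((ψ m : ℝ) + 1)) Filter.atTop (nhds 0) :=
          tendsto_one_div_add_atTop_nhds_zero_nat.comp hψ.tendsto_atTop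
        have hblimK : blim ∈ K n x := by
          apply hmemK n x blim hblim
          intro i hi
          have h1 : Filter.Tendsto (fun m => φ i (b (ψ m))) Filter.atTop (nhds (φ i blim)) :=
            ((φcont i).tendsto blim).comp hlim
          have h2 : Filter.Tendsto (fun m : ℕ => g i x + 1 / ((ψ m : ℝ) + 1)) Filter.atTop
              (nhds (g i x + 0)) := tendsto_const_nhds.add hεlim
          rw [add_zero] at h2
          refine le_of_tendsto_of_tendsto' h1 h2 (fun m => ?_)
          have := (hb (ψ m)).1 ⟨i, hi⟩
          have := hq (ψ m) ⟨i, hi⟩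
          push_cast at *
          linarith
        have hφlim : Filter.Tendsto (fun m => φ n (b (ψ m))) Filter.atTop (nhds (φ n blim)) :=
          ((φcont n).tendsto blim).comp hlim
        have h2 : Filter.Tendsto (fun m : ℕ => t + 1 / ((ψ m : ℝ) + 1)) Filter.atTop
            (nhds (t + 0)) := tendsto_const_nhds.add hεlim
        rw [add_zero] at h2
        have hφle : φ n blim ≤ t := by
          refine le_of_tendsto_of_tendsto' hφlim h2 (fun m => ?_)
          have := (hb (ψ m)).2
          push_cast at *
          linarith
        exact le_trans (hginf n x blim hblimK) hφle
    rw [key]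
    refine MeasurableSet.iInter (fun m => MeasurableSet.iUnion (fun q => ?_))
    refine MeasurableSet.inter (MeasurableSet.iInter (fun i => ?_)) ?_
    · exact measurableSet_lt measurable_const ((ih i i.2).add_const _)
    · refine (hπclosed _ ?_).measurableSet
      exact (isClosed_iInter (fun i : Fin n =>
        isClosed_le (φcont i) continuous_const)).inter
        (isClosed_le (φcont n) continuous_const)
  -- conclude: `s` is measurable via the embedding into `ℕ → ℝ`
  set e : B → (ℕ → ℝ) := fun b n => dist b (u n) with he
  have he_cont : Continuous e := continuous_pi fun n => continuous_id.dist continuous_const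
  have he_inj : Function.Injective e := by
    intro b b' h
    have hAll : ∀ c ∈ Set.range u, dist b c = dist b' c := by
      rintro c ⟨n, rfl⟩
      exact congrFun h n
    obtain ⟨v, hv1, hv2⟩ := mem_closure_iff_seq_limit.1 (hu b)
    have h1 : Filter.Tendsto (fun k => dist b (v k)) Filter.atTop (nhds (dist b b)) :=
      tendsto_const_nhds.dist hv2
    have h2 : Filter.Tendsto (fun k => dist b (v k)) Filter.atTop (nhds (dist b' b)) := by
      have : (fun k => dist b (v k)) = fun k => dist b' (v k) :=
        funext fun k => hAll _ (hv1 k)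
      rw [this]
      exact tendsto_const_nhds.dist hv2
    have := tendsto_nhds_unique h1 h2
    rw [dist_self] at this
    exact (dist_eq_zero.1 this.symm).symm
  have hemb : MeasurableEmbedding e :=
    (he_cont.isClosedEmbedding he_inj).measurableEmbedding
  have hes : e ∘ s = fun x n => g n x := by
    funext x n
    exact hsg n x
  have hsmeas : Measurable s := by
    rw [← hemb.measurable_comp_iff, hes]
    exact measurable_pi_lambda _ (fun n => hgmeas n)
  exact ⟨s, hsmeas, hsec⟩

/-- Let `A` be a compact abelian topological group (compact, Hausdorff,
second-countable) acting continuously and freely on a compact space `B`, let `S = B/A` be the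
orbit space with the quotient topology and `π : B → S` the orbit map (modelled by a topological
quotient map whose fibres are exactly the `A`-orbits).  Then there is a Borel measurable map
`s : S → B` with `π (s x) = x` for every `x ∈ S` (a Borel cross section of the bundle). -/
theorem stmt17
    {A B S : Type*}
    [AddCommGroup A] [TopologicalSpace A] [IsTopologicalAddGroup A]
    [CompactSpace A] [T2Space A] [SecondCountableTopology A]
    [TopologicalSpace B] [CompactSpace B] [T2Space B] [SecondCountableTopology B]
    [MeasurableSpace B] [BorelSpace B]
    [TopologicalSpace S] [CompactSpace S] [T2Space S] [SecondCountableTopology S]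
    [MeasurableSpace S] [BorelSpace S]
    [AddAction A B] [ContinuousVAdd A B]
    (hfree : ∀ (a : A) (b : B), a +ᵥ b = b → a = 0)
    (π : B → S) (hquot : Topology.IsQuotientMap π)
    (hfib : ∀ b b' : B, π b = π b' ↔ ∃ a : A, a +ᵥ b = b') :
    ∃ s : S → B, Measurable s ∧ ∀ x : S, π (s x) = x := by
  letI : MetricSpace B := TopologicalSpace.metrizableSpaceMetric B
  exact aux_cross_section π hquot.continuous hquot.surjective
end
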